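/- For every integer ℓ ≥ 1 and every integer r ≥ 1, the r-coloring number of G_ℓ satisfies col_r(G_ℓ) ≤ 2r + 8 (for every choice of the injections μ_s and of the rib endpoint labelings). -/
import Mathlib


namespace PaperDefs

/-- `v : Fin n → V` is a path of order `n` in `G`: distinct vertices,
consecutive ones adjacent. -/
def IsPathSeq {V : Type*} (G : SimpleGraph V) {n : ℕ} (v : Fin n → V) : Prop :=
  Function.Injective v ∧ ∀ i j : Fin n, (j : ℕ) = (i : ℕ) + 1 → G.Adj (v i) (v j)

/-- `v : Fin n → V` is an induced path of order `n` in `G`: a path with no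
edge between vertices at distance ≥ 2 along the path. -/
def IsInducedPathSeq {V : Type*} (G : SimpleGraph V) {n : ℕ} (v : Fin n → V) : Prop :=
  IsPathSeq G v ∧ ∀ i j : Fin n, (i : ℕ) + 1 < (j : ℕ) → ¬ G.Adj (v i) (v j)

/-- `G` is `k`-degenerate: every nonempty (induced) subgraph has a vertex of
degree at most `k`. -/
def KDeg {V : Type*} (G : SimpleGraph V) (k : ℕ) : Prop :=
  ∀ s : Set V, s.Nonempty → ∃ v ∈ s, {u | u ∈ s ∧ G.Adj v u}.ncard ≤ k

/-- `G` has a Hamiltonian path. -/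
def HamPath {V : Type*} [Fintype V] (G : SimpleGraph V) : Prop :=
  ∃ v : Fin (Fintype.card V) → V, Function.Bijective v ∧
    ∀ i j : Fin (Fintype.card V), (j : ℕ) = (i : ℕ) + 1 → G.Adj (v i) (v j)

/-- `y` is `r`-reachable from `x` w.r.t. the vertex ordering given by the
injection `f : V → ℕ`. -/
def RReach {V : Type*} (G : SimpleGraph V) (f : V → ℕ) (r : ℕ) (x y : V) : Prop :=
  f y < f x ∧ ∃ w : G.Walk x y, w.IsPath ∧ w.length ≤ r ∧
    ∀ z ∈ w.support, z ≠ x → z ≠ y → f x < f z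

/-- `col_r(G) ≤ k`: some linear order on the vertices witnesses that at most `k`
vertices are `r`-reachable from every vertex. -/
def ColAtMost {V : Type*} (G : SimpleGraph V) (r k : ℕ) : Prop :=
  ∃ f : V → ℕ, Function.Injective f ∧ ∀ x : V, {y | RReach G f r x y}.ncard ≤ k

end PaperDefs
namespace PaperDefs

/-- The function `h` with `h 1 = 3` and `h (ℓ+1) = 2 + 2 * h ℓ`
(equivalently `h ℓ = 5·2^(ℓ-1) - 2` for `ℓ ≥ 1`). -/
def h : ℕ → ℕ
  | 0 => 0
  | 1 => 3
  | n + 2 => 2 + 2 * h (n + 1)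

/-- Shift a set of pairs of integers by `i`. -/
def shift (X : Set (ℕ × ℕ)) (i : ℕ) : Set (ℕ × ℕ) := (fun q => (q.1 + i, q.2 + i)) '' X

/-- The nested interval system `N_ℓ`. -/
def Nset : ℕ → Set (ℕ × ℕ)
  | 0 => ∅
  | 1 => {(1, 3)}
  | ℓ + 2 => {(1, h (ℓ + 2))} ∪ shift (Nset (ℓ + 1)) 1 ∪ shift (Nset (ℓ + 1)) (h (ℓ + 1) + 1)

/-- Nodes of the complete binary tree of depth `p`, heap-indexed by
`1, …, 2^p - 1` (node `i` has children `2i` and `2i+1`). -/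
def isNode (p i : ℕ) : Prop := 1 ≤ i ∧ i < 2 ^ p

/-- Adjacency in the complete binary tree of depth `p` (heap indexing). -/
def treeAdj (p s t : ℕ) : Prop := isNode p s ∧ isNode p t ∧ (s = t / 2 ∨ t = s / 2)

/-- The depth of node `i` (the root `1` has depth `1`). -/
def nodeDepth (i : ℕ) : ℕ := Nat.log 2 i + 1

/-- `s ⪯ t` : `s` is an ancestor of `t` (heap indexing). -/
def anc (s t : ℕ) : Prop := ∃ k, t / 2 ^ k = s

/-- `s ≺ t` : `s` is a strict ancestor of `t` (heap indexing). -/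
def strictAnc (s t : ℕ) : Prop := ∃ k, 1 ≤ k ∧ t / 2 ^ k = s

/-- The nodes of the complete binary tree of depth `p`. -/
abbrev TNode (p : ℕ) := {i : Fin (2 ^ p) // 1 ≤ (i : ℕ)}

/-- The non-root nodes of the complete binary tree of depth `p`. -/
abbrev NRNode (p : ℕ) := {i : Fin (2 ^ p) // 2 ≤ (i : ℕ)}

/-- Vertices of a blow-up of the complete binary tree of depth `p`:
for every node `s` a clique `K^s` on 3 vertices (`Sum.inl (s, i)`),
and for every non-root node `t` the four subdivision vertices
`pred t = {x₁, y₁, x₂, y₂}` (`Sum.inr (t, j)` with `j = 0, 1, 2, 3`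
standing for `x₁, y₁, x₂, y₂`; so `tpred t = {0, 2}` and `bpred t = {1, 3}`). -/
abbrev BV (p : ℕ) := (TNode p × Fin 3) ⊕ (NRNode p × Fin 4)

/-- The projection `π` mapping a vertex of the blow-up to (the heap index of)
the node of the tree it originates from. -/
def πn {p : ℕ} : BV p → ℕ
  | Sum.inl (s, _) => (s.1 : ℕ)
  | Sum.inr (t, _) => (t.1 : ℕ)

/-- The depth of a vertex of the blow-up. -/
def vDepth {p : ℕ} (u : BV p) : ℕ := nodeDepth (πn u)

/-- Edges of the triangle `K^s` (on vertex set `Fin 3`) are identified with the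
vertex they miss; `other k b` enumerates (as `b` ranges over `Bool`) the two
endpoints of the edge `k`. -/
def other (k : Fin 3) (b : Bool) : Fin 3 := k + (if b then 1 else 2)

/-- The arbitrary choices made when constructing a blow-up of the complete binary
tree of depth `p`: the injections `μ_s` from the neighbors of `s` to the edges of
`K^s` (an edge of `K^s` being encoded by the vertex of `Fin 3` it misses), the
choices `ε` of labelings of the endpoints of the edges `μ_s t`, and the top (root)
edge of the root clique, which must be outside the image of `μ` at the root. -/
structure BUChoices (p : ℕ) where
  μ : ℕ → ℕ → Fin 3
  ε : ℕ → ℕ → Bool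
  rootTop : Fin 3
  μ_inj : ∀ s t t', treeAdj p s t → treeAdj p s t' → μ s t = μ s t' → t = t'
  rootTop_spec : ∀ t, treeAdj p 1 t → μ 1 t ≠ rootTop

/-- The (encoding of the) top edge of the clique `K^s`. -/
def topIdx {p : ℕ} (C : BUChoices p) (s : ℕ) : Fin 3 :=
  if s = 1 then C.rootTop else C.μ s (s / 2)

/-- The base relation of the blow-up: clique edges inside each `K^s`, and for every
non-root node `t` with parent `s` the two paths
`L(s,t) = u₁ x₁ y₁ v₁` and `R(s,t) = u₂ x₂ y₂ v₂`, where `u₁, u₂` are the endpoints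
of `μ_s t` and `v₁, v₂` those of `μ_t s` (as labeled by `ε`). -/
def buRel {p : ℕ} (C : BUChoices p) : BV p → BV p → Prop
  | Sum.inl (s, i), Sum.inl (s', j) => s = s' ∧ i ≠ j
  | Sum.inl (s, i), Sum.inr (t, j) =>
      ((s.1 : ℕ) = (t.1 : ℕ) / 2 ∧
        ((j = 0 ∧ i = other (C.μ (s.1 : ℕ) (t.1 : ℕ)) (C.ε (s.1 : ℕ) (t.1 : ℕ))) ∨
         (j = 2 ∧ i = other (C.μ (s.1 : ℕ) (t.1 : ℕ)) (! C.ε (s.1 : ℕ) (t.1 : ℕ))))) ∨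
      ((s.1 : ℕ) = (t.1 : ℕ) ∧
        ((j = 1 ∧ i = other (C.μ (t.1 : ℕ) ((t.1 : ℕ) / 2)) (C.ε (t.1 : ℕ) ((t.1 : ℕ) / 2))) ∨
         (j = 3 ∧ i = other (C.μ (t.1 : ℕ) ((t.1 : ℕ) / 2)) (! C.ε (t.1 : ℕ) ((t.1 : ℕ) / 2)))))
  | Sum.inr (t, j), Sum.inr (t', j') => t = t' ∧ ((j = 0 ∧ j' = 1) ∨ (j = 2 ∧ j' = 3))
  | Sum.inr _, Sum.inl _ => False

/-- The blow-up of the complete binary tree of depth `p`, for the choices `C`. -/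
def blowup {p : ℕ} (C : BUChoices p) : SimpleGraph (BV p) := SimpleGraph.fromRel (buRel C)

/-- A vertex incident with the root edge of the blow-up. -/
def isRootEnd {p : ℕ} (C : BUChoices p) (u : BV p) : Prop :=
  ∃ s x, u = Sum.inl (s, x) ∧ (s.1 : ℕ) = 1 ∧ x ≠ C.rootTop

/-- The arbitrary choices made when constructing `G_ℓ`: those of the underlying
blow-up of `B_ℓ` (the complete binary tree of depth `h ℓ`) together with, for every
pair `s ≺ t`, the labeling `ρ` of the endpoints `u₁, u₂` of the top edge of `K^s`
used for the ribs towards `pred t`. -/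
structure GChoices (ℓ : ℕ) extends BUChoices (h ℓ) where
  ρ : ℕ → ℕ → Bool

/-- The rib edges: for `s ≺ t` with `(depth s, depth t) ∈ N_ℓ`, the edges
`u₁x₁, u₁x₂, u₂y₁, u₂y₂` where `u₁u₂` is the top edge of `K^s`. -/
def ribRel {ℓ : ℕ} (C : GChoices ℓ) : BV (h ℓ) → BV (h ℓ) → Prop
  | Sum.inl (s, i), Sum.inr (t, j) =>
      strictAnc (s.1 : ℕ) (t.1 : ℕ) ∧ (nodeDepth (s.1 : ℕ), nodeDepth (t.1 : ℕ)) ∈ Nset ℓ ∧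
      (((j = 0 ∨ j = 2) ∧ i = other (topIdx C.toBUChoices (s.1 : ℕ)) (C.ρ (s.1 : ℕ) (t.1 : ℕ))) ∨
       ((j = 1 ∨ j = 3) ∧ i = other (topIdx C.toBUChoices (s.1 : ℕ)) (! C.ρ (s.1 : ℕ) (t.1 : ℕ))))
  | _, _ => False

/-- The graph `G_ℓ`: the blow-up `H_ℓ` of `B_ℓ` together with the ribs. -/
def Gl {ℓ : ℕ} (C : GChoices ℓ) : SimpleGraph (BV (h ℓ)) :=
  SimpleGraph.fromRel (fun u v => buRel C.toBUChoices u v ∨ ribRel C u v)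

/-- `s` is a source of `B_ℓ` of rank `a`. -/
def IsSourceOfRank (ℓ s a : ℕ) : Prop :=
  isNode (h ℓ) s ∧ 1 ≤ a ∧ a ≤ ℓ ∧ (nodeDepth s, nodeDepth s + h a - 1) ∈ Nset ℓ

/-- `s` is a source of `B_ℓ`. -/
def IsSource (ℓ s : ℕ) : Prop := isNode (h ℓ) s ∧ ∃ j, (nodeDepth s, j) ∈ Nset ℓ

/-- `t` is an internal node of `B_ℓ(s)`, for `s` a source of rank `a`. -/
def InternalNode (ℓ s a t : ℕ) : Prop :=
  strictAnc s t ∧ nodeDepth t < nodeDepth s + h a - 1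

/-- `t` is a node of the subtree `B_ℓ(s)`, for `s` a source of rank `a`. -/
def SubtreeNode (ℓ s a t : ℕ) : Prop :=
  anc s t ∧ nodeDepth t ≤ nodeDepth s + h a - 1

/-- The set of ranks of sources `s` such that `t` is an internal node of `B_ℓ(s)`. -/
def tauSet (ℓ t : ℕ) : Set ℕ := {a | ∃ s, IsSourceOfRank ℓ s a ∧ InternalNode ℓ s a t}

/-- `τ(u)`: the minimum rank of a source `s` such that `π(u)` is an internal node of
`B_ℓ(s)`, and `ℓ + 1` if there is no such source. -/
noncomputable def tau (ℓ : ℕ) (u : BV (h ℓ)) : ℕ := by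
  classical
  exact if (tauSet ℓ (πn u)).Nonempty then sInf (tauSet ℓ (πn u)) else ℓ + 1

/-- `u` is a vertex incident with the top edge of the clique `K^s`. -/
def TopEdgeVert {ℓ : ℕ} (C : GChoices ℓ) (s : ℕ) (u : BV (h ℓ)) : Prop :=
  ∃ sn x, u = Sum.inl (sn, x) ∧ (sn.1 : ℕ) = s ∧ x ≠ topIdx C.toBUChoices s

/-- `u ∈ pred s`. -/
def InPred {p : ℕ} (s : ℕ) (u : BV p) : Prop := ∃ t j, u = Sum.inr (t, j) ∧ (t.1 : ℕ) = s

/-- `u` and `w` lie in a common clique `K^s`. -/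
def CliquePair {p : ℕ} (u w : BV p) : Prop :=
  ∃ s i j, u = Sum.inl (s, i) ∧ w = Sum.inl (s, j)

/-- `uw` is a tree edge of `G_ℓ`: an edge of the blow-up `H_ℓ` that is not a
clique edge. -/
def IsTreeEdge {ℓ : ℕ} (C : GChoices ℓ) (u w : BV (h ℓ)) : Prop :=
  (blowup C.toBUChoices).Adj u w ∧ ¬ CliquePair u w

/-- The source `s` is `Q`-special for the induced path `Q = v`. -/
def QSpecial {ℓ q : ℕ} (C : GChoices ℓ) (v : Fin q → BV (h ℓ)) (s : ℕ) : Prop :=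
  ∃ a, IsSourceOfRank ℓ s a ∧ (∃ i, TopEdgeVert C s (v i)) ∧
    ∃ j, InternalNode ℓ s a (πn (v j))

end PaperDefs
namespace PaperDefs

/-! ### Basic facts about `h` -/

lemma h_ge_three : ∀ ℓ : ℕ, 1 ≤ ℓ → 3 ≤ h ℓ := by
  intro ℓ hℓ
  induction ℓ using Nat.twoStepInduction with
  | zero => omega
  | one => simp [h]
  | more n ih1 ih2 =>
    have : 3 ≤ h (n + 1) := by
      cases n with
      | zero => simp [h]
      | succ m => exact ih2 (by omega)
    show 3 ≤ 2 + 2 * h (n + 1)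
    omega

/-! ### Basic facts about `Nset` -/

lemma mem_Nset_step {ℓ : ℕ} {c : ℕ × ℕ} :
    c ∈ Nset (ℓ + 2) ↔ c = (1, h (ℓ + 2)) ∨
      (∃ d ∈ Nset (ℓ + 1), c = (d.1 + 1, d.2 + 1)) ∨
      (∃ d ∈ Nset (ℓ + 1), c = (d.1 + (h (ℓ + 1) + 1), d.2 + (h (ℓ + 1) + 1))) := by
  simp only [Nset, shift, Set.mem_union, Set.mem_image, Set.mem_singleton_iff]
  constructor
  · rintro ((hc | ⟨d, hd, rfl⟩) | ⟨d, hd, rfl⟩)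
    · exact Or.inl hc
    · exact Or.inr (Or.inl ⟨d, hd, rfl⟩)
    · exact Or.inr (Or.inr ⟨d, hd, rfl⟩)
  · rintro (hc | ⟨d, hd, rfl⟩ | ⟨d, hd, rfl⟩)
    · exact Or.inl (Or.inl hc)
    · exact Or.inl (Or.inr ⟨d, hd, rfl⟩)
    · exact Or.inr ⟨d, hd, rfl⟩

lemma Nset_bounds : ∀ ℓ : ℕ, ∀ c ∈ Nset ℓ, 1 ≤ c.1 ∧ c.1 < c.2 ∧ c.2 ≤ h ℓ := by
  intro ℓ
  induction ℓ using Nat.twoStepInduction with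
  | zero => intro c hc; simp [Nset] at hc
  | one => intro c hc; simp only [Nset, Set.mem_singleton_iff] at hc; subst hc; simp [h]
  | more n ih1 ih2 =>
    intro c hc
    have hh : h (n + 2) = 2 + 2 * h (n + 1) := rfl
    rcases mem_Nset_step.1 hc with hc | ⟨d, hd, rfl⟩ | ⟨d, hd, rfl⟩
    · subst hc
      have h3 := h_ge_three (n + 1) (by omega)
      exact ⟨le_refl _, by omega, le_refl _⟩
    · obtain ⟨h1, h2, h3⟩ := ih2 d hd
      have hg := h_ge_three (n + 1) (by omega)
      exact ⟨by omega, by omega, by omega⟩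
    · obtain ⟨h1, h2, h3⟩ := ih2 d hd
      have hg := h_ge_three (n + 1) (by omega)
      exact ⟨by omega, by omega, by omega⟩

end PaperDefs
namespace PaperDefs

/-- Strict laminarity of the interval family `Nset ℓ`. -/
lemma Nset_laminar : ∀ ℓ : ℕ, ∀ c ∈ Nset ℓ, ∀ d ∈ Nset ℓ,
    c = d ∨ (c.1 < d.1 ∧ d.2 < c.2) ∨ (d.1 < c.1 ∧ c.2 < d.2) ∨ c.2 < d.1 ∨ d.2 < c.1 := by
  intro ℓ
  induction ℓ using Nat.twoStepInduction with
  | zero => intro c hc; simp [Nset] at hc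
  | one =>
    intro c hc d hd
    simp only [Nset, Set.mem_singleton_iff] at hc hd
    exact Or.inl (hc.trans hd.symm)
  | more n ih1 ih2 =>
    intro c hc d hd
    have hh : h (n + 2) = 2 + 2 * h (n + 1) := rfl
    have hg := h_ge_three (n + 1) (by omega)
    rcases mem_Nset_step.1 hc with hc' | ⟨a, ha, rfl⟩ | ⟨a, ha, rfl⟩ <;>
      rcases mem_Nset_step.1 hd with hd' | ⟨b, hb, rfl⟩ | ⟨b, hb, rfl⟩
    · exact Or.inl (hc'.trans hd'.symm)
    · obtain ⟨b1, b2, b3⟩ := Nset_bounds _ b hb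
      subst hc'; right; left; constructor <;> simp <;> omega
    · obtain ⟨b1, b2, b3⟩ := Nset_bounds _ b hb
      subst hc'; right; left; constructor <;> simp <;> omega
    · obtain ⟨a1, a2, a3⟩ := Nset_bounds _ a ha
      subst hd'; right; right; left; constructor <;> simp <;> omega
    · rcases ih2 a ha b hb with hab | ⟨h1, h2⟩ | ⟨h1, h2⟩ | h1 | h1
      · exact Or.inl (by rw [hab])
      · exact Or.inr (Or.inl ⟨by simpa using h1, by simpa using h2⟩)
      · exact Or.inr (Or.inr (Or.inl ⟨by simpa using h1, by simpa using h2⟩))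
      · exact Or.inr (Or.inr (Or.inr (Or.inl (by simpa using h1))))
      · exact Or.inr (Or.inr (Or.inr (Or.inr (by simpa using h1))))
    · obtain ⟨a1, a2, a3⟩ := Nset_bounds _ a ha
      obtain ⟨b1, b2, b3⟩ := Nset_bounds _ b hb
      right; right; right; left; simp; omega
    · obtain ⟨a1, a2, a3⟩ := Nset_bounds _ a ha
      subst hd'; right; right; left; constructor <;> simp <;> omega
    · obtain ⟨a1, a2, a3⟩ := Nset_bounds _ a ha
      obtain ⟨b1, b2, b3⟩ := Nset_bounds _ b hb
      right; right; right; right; simp; omega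
    · rcases ih2 a ha b hb with hab | ⟨h1, h2⟩ | ⟨h1, h2⟩ | h1 | h1
      · exact Or.inl (by rw [hab])
      · exact Or.inr (Or.inl ⟨by simpa using h1, by simpa using h2⟩)
      · exact Or.inr (Or.inr (Or.inl ⟨by simpa using h1, by simpa using h2⟩))
      · exact Or.inr (Or.inr (Or.inr (Or.inl (by simpa using h1))))
      · exact Or.inr (Or.inr (Or.inr (Or.inr (by simpa using h1))))

/-- Right endpoints determine the interval. -/
lemma Nset_right_unique {ℓ : ℕ} {c d : ℕ × ℕ} (hc : c ∈ Nset ℓ) (hd : d ∈ Nset ℓ)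
    (h2 : c.2 = d.2) : c = d := by
  obtain ⟨c1, c2, c3⟩ := Nset_bounds _ c hc
  obtain ⟨d1, d2, d3⟩ := Nset_bounds _ d hd
  rcases Nset_laminar _ c hc d hd with hcd | ⟨ha, hb⟩ | ⟨ha, hb⟩ | ha | ha <;> first
    | exact hcd | omega

/-- Left endpoints determine the interval. -/
lemma Nset_left_unique {ℓ : ℕ} {c d : ℕ × ℕ} (hc : c ∈ Nset ℓ) (hd : d ∈ Nset ℓ)
    (h1 : c.1 = d.1) : c = d := by
  obtain ⟨c1, c2, c3⟩ := Nset_bounds _ c hc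
  obtain ⟨d1, d2, d3⟩ := Nset_bounds _ d hd
  rcases Nset_laminar _ c hc d hd with hcd | ⟨ha, hb⟩ | ⟨ha, hb⟩ | ha | ha <;> first
    | exact hcd | omega

lemma Nset_finite (ℓ : ℕ) : (Nset ℓ).Finite := by
  have : Nset ℓ ⊆ (Set.Icc 1 (h ℓ)) ×ˢ (Set.Icc 1 (h ℓ)) := by
    intro c hc
    obtain ⟨c1, c2, c3⟩ := Nset_bounds _ c hc
    exact ⟨⟨c1, by omega⟩, ⟨by omega, c3⟩⟩
  exact Set.Finite.subset (Set.Finite.prod (Set.finite_Icc _ _) (Set.finite_Icc _ _)) this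

end PaperDefs
namespace PaperDefs

/-! ### Depth and ancestor arithmetic -/

lemma nodeDepth_child {t : ℕ} (ht : 2 ≤ t) : nodeDepth (t / 2) + 1 = nodeDepth t := by
  have hl : 0 < Nat.log 2 t := Nat.log_pos (by omega) ht
  unfold nodeDepth
  rw [Nat.log_div_base]
  omega

lemma nodeDepth_div_pow {t : ℕ} : ∀ k : ℕ, 1 ≤ t / 2 ^ k → nodeDepth (t / 2 ^ k) + k = nodeDepth t := by
  intro k
  induction k with
  | zero => intro _; simp
  | succ m ih =>
    intro hk
    have hdd : t / 2 ^ (m + 1) = (t / 2 ^ m) / 2 := by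
      rw [Nat.div_div_eq_div_mul, ← pow_succ]
    have h2 : 2 ≤ t / 2 ^ m := by
      rw [hdd] at hk
      omega
    have := nodeDepth_child h2
    rw [hdd]
    have ih' := ih (by omega)
    omega

lemma anc_refl (s : ℕ) : anc s s := ⟨0, by simp⟩

lemma anc_trans {s t u : ℕ} (h1 : anc s t) (h2 : anc t u) : anc s u := by
  obtain ⟨k, hk⟩ := h1
  obtain ⟨j, hj⟩ := h2
  exact ⟨j + k, by rw [pow_add, ← Nat.div_div_eq_div_mul, hj, hk]⟩

lemma strictAnc_anc {s t : ℕ} (h : strictAnc s t) : anc s t := by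
  obtain ⟨k, _, hk⟩ := h; exact ⟨k, hk⟩

lemma anc_depth_le {s t : ℕ} (h : anc s t) (hs : 1 ≤ s) : nodeDepth s ≤ nodeDepth t := by
  obtain ⟨k, hk⟩ := h
  have h2 := nodeDepth_div_pow (t := t) k (by omega)
  rw [hk] at h2
  omega

lemma strictAnc_depth_lt {s t : ℕ} (h : strictAnc s t) (hs : 1 ≤ s) :
    nodeDepth s < nodeDepth t := by
  obtain ⟨k, hk1, hk⟩ := h
  have h2 := nodeDepth_div_pow (t := t) k (by omega)
  rw [hk] at h2
  omega

lemma anc_eq_of_depth_le {s t : ℕ} (h : anc s t) (hs : 1 ≤ s)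
    (hd : nodeDepth t ≤ nodeDepth s) : s = t := by
  obtain ⟨k, hk⟩ := h
  have hd2 := nodeDepth_div_pow (t := t) k (by omega)
  rw [hk] at hd2
  have hk0 : k = 0 := by omega
  subst hk0
  simpa using hk.symm

/-- Two ancestors of the same node are comparable. -/
lemma anc_total {s s' m : ℕ} (h1 : anc s m) (h2 : anc s' m) : anc s s' ∨ anc s' s := by
  obtain ⟨k, hk⟩ := h1
  obtain ⟨j, hj⟩ := h2
  rcases le_total k j with hkj | hkj
  · right
    refine ⟨j - k, ?_⟩
    have he : k + (j - k) = j := by omega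
    rw [← hk, Nat.div_div_eq_div_mul, ← pow_add, he, hj]
  · left
    refine ⟨k - j, ?_⟩
    have he : j + (k - j) = k := by omega
    rw [← hj, Nat.div_div_eq_div_mul, ← pow_add, he, hk]

lemma anc_parent (t : ℕ) : anc (t / 2) t := ⟨1, by norm_num⟩

/-- Key step: from `anc n a`, if `b` is comparable to `a` and at depth `≥ depth n`,
then `anc n b`. -/
lemma anc_step {n a b D : ℕ} (hn : 1 ≤ n) (hb : 1 ≤ b) (hD : nodeDepth n = D)
    (hna : anc n a) (hcomp : anc a b ∨ anc b a) (hbD : D ≤ nodeDepth b) : anc n b := by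
  rcases hcomp with hab | hba
  · exact anc_trans hna hab
  · rcases anc_total hna hba with hnb | hbn
    · exact hnb
    · have : b = n := anc_eq_of_depth_le hbn hb (by omega)
      rw [this]
      exact anc_refl n

end PaperDefs
namespace PaperDefs

lemma one_le_πn {p : ℕ} (u : BV p) : 1 ≤ πn u := by
  rcases u with ⟨s, i⟩ | ⟨t, j⟩
  · exact s.2
  · exact le_trans (by omega) t.2

/-! ### The vertex ordering -/

noncomputable def ford (p : ℕ) : BV p → ℕ := fun u =>
  vDepth u * Fintype.card (BV p) + ((Fintype.equivFin (BV p)) u : ℕ)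

lemma ford_lt_of_depth_lt {p : ℕ} {u v : BV p} (hd : vDepth u < vDepth v) :
    ford p u < ford p v := by
  unfold ford
  have h1 : ((Fintype.equivFin (BV p)) u : ℕ) < Fintype.card (BV p) := Fin.is_lt _
  have h2 : (vDepth u + 1) * Fintype.card (BV p) ≤ vDepth v * Fintype.card (BV p) :=
    Nat.mul_le_mul_right _ hd
  nlinarith [Nat.zero_le (((Fintype.equivFin (BV p)) v : ℕ))]

lemma ford_injective (p : ℕ) : Function.Injective (ford p) := by
  intro u v huv
  have hd : vDepth u = vDepth v := by
    by_contra hne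
    rcases Nat.lt_or_ge (vDepth u) (vDepth v) with hlt | hge
    · exact absurd huv (Nat.ne_of_lt (ford_lt_of_depth_lt hlt))
    · have : vDepth v < vDepth u := by omega
      exact absurd huv.symm (Nat.ne_of_lt (ford_lt_of_depth_lt this))
  unfold ford at huv
  rw [hd] at huv
  have : ((Fintype.equivFin (BV p)) u : ℕ) = ((Fintype.equivFin (BV p)) v : ℕ) := by omega
  exact (Fintype.equivFin (BV p)).injective (Fin.ext this)

lemma depth_le_of_ford_le {p : ℕ} {u v : BV p} (hf : ford p u ≤ ford p v) :
    vDepth u ≤ vDepth v := by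
  by_contra hc
  exact absurd hf (not_le.mpr (ford_lt_of_depth_lt (by omega)))

/-! ### The potential function ψ -/

/-- The crossing intervals at level `D`, truncated at right endpoint `e`. -/
def CRe (ℓ D e : ℕ) : Set (ℕ × ℕ) := {c | c ∈ Nset ℓ ∧ c.1 < D ∧ D ≤ c.2 ∧ c.2 ≤ e}

noncomputable def psi (ℓ D e : ℕ) : ℕ := (CRe ℓ D e).ncard

lemma CRe_finite (ℓ D e : ℕ) : (CRe ℓ D e).Finite :=
  (Nset_finite ℓ).subset (fun c hc => hc.1)

lemma psi_mono {ℓ D : ℕ} {e e' : ℕ} (h : e ≤ e') : psi ℓ D e ≤ psi ℓ D e' :=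
  Set.ncard_le_ncard (fun c hc => ⟨hc.1, hc.2.1, hc.2.2.1, le_trans hc.2.2.2 h⟩)
    (CRe_finite ℓ D e')

lemma psi_succ_le {ℓ D e : ℕ} : psi ℓ D (e + 1) ≤ psi ℓ D e + 1 := by
  by_cases hex : ∃ c ∈ Nset ℓ, c.1 < D ∧ D ≤ c.2 ∧ c.2 = e + 1
  · obtain ⟨c0, hc0, hc1, hc2, hc3⟩ := hex
    have hsub : CRe ℓ D (e + 1) ⊆ CRe ℓ D e ∪ {c0} := by
      intro c hc
      rcases Nat.lt_or_ge c.2 (e + 1) with hlt | hge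
      · exact Or.inl ⟨hc.1, hc.2.1, hc.2.2.1, by omega⟩
      · have h2 : c.2 = e + 1 := by have := hc.2.2.2; omega
        right
        have : c = c0 := Nset_right_unique hc.1 hc0 (by omega)
        simp [this]
    calc psi ℓ D (e + 1) ≤ (CRe ℓ D e ∪ {c0}).ncard :=
          Set.ncard_le_ncard hsub (((CRe_finite ℓ D e)).union (Set.finite_singleton _))
      _ ≤ (CRe ℓ D e).ncard + ({c0} : Set (ℕ × ℕ)).ncard := Set.ncard_union_le _ _
      _ ≤ psi ℓ D e + 1 := by unfold psi; simp
  · have hsub : CRe ℓ D (e + 1) ⊆ CRe ℓ D e := by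
      intro c hc
      have : c.2 ≠ e + 1 := fun hcc => hex ⟨c, hc.1, hc.2.1, hc.2.2.1, hcc⟩
      exact ⟨hc.1, hc.2.1, hc.2.2.1, by have := hc.2.2.2; omega⟩
    exact le_trans (Set.ncard_le_ncard hsub (CRe_finite ℓ D e)) (Nat.le_succ _)

/-- Jumping along a rib interval whose source is at depth `≥ D` does not change ψ. -/
lemma psi_rib_eq {ℓ D S T : ℕ} (hST : (S, T) ∈ Nset ℓ) (hDS : D ≤ S) :
    psi ℓ D T = psi ℓ D S := by
  have hb := Nset_bounds _ _ hST
  unfold psi CRe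
  congr 1
  ext c
  simp only [Set.mem_setOf_eq]
  constructor
  · rintro ⟨hc, h1, h2, h3⟩
    refine ⟨hc, h1, h2, ?_⟩
    rcases Nset_laminar _ c hc _ hST with hcd | ⟨ha, hb'⟩ | ⟨ha, hb'⟩ | ha | ha
    · exfalso; rw [hcd] at h1; simp at h1; omega
    · simp at ha hb'; omega
    · simp at ha hb'
      have hcb := Nset_bounds _ c hc
      omega
    · simp at ha
      have hcb := Nset_bounds _ c hc
      omega
    · simp at ha
      have hcb := Nset_bounds _ c hc
      omega
  · rintro ⟨hc, h1, h2, h3⟩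
    exact ⟨hc, h1, h2, by simp at hb; omega⟩

lemma psi_at_D {ℓ D : ℕ} : psi ℓ D D ≤ 1 := by
  have : (CRe ℓ D D).Subsingleton := by
    intro c hc d hd
    exact Nset_right_unique hc.1 hd.1 (by have := hc.2; have := hd.2; omega)
  have := this.finite
  rcases Set.eq_empty_or_nonempty (CRe ℓ D D) with he | hne
  · simp [psi, he]
  · obtain ⟨c, hc⟩ := hne
    have : CRe ℓ D D = {c} := Set.Subsingleton.eq_singleton_of_mem ‹(CRe ℓ D D).Subsingleton› hc
    simp [psi, this]

lemma one_le_psi {ℓ D T : ℕ} (h : (CRe ℓ D T).Nonempty) : 1 ≤ psi ℓ D T :=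
  (Set.ncard_pos (CRe_finite ℓ D T)).mpr h

/-- ψ is strictly monotone across crossing right endpoints. -/
lemma psi_strict {ℓ D T T' : ℕ} (hT' : (CRe ℓ D T').Nonempty)
    (hx : ∃ c ∈ CRe ℓ D T', c.2 = T') (hTT : T < T') : psi ℓ D T < psi ℓ D T' := by
  obtain ⟨c, hc, hc2⟩ := hx
  apply Set.ncard_lt_ncard _ (CRe_finite ℓ D T')
  constructor
  · intro d hd
    exact ⟨hd.1, hd.2.1, hd.2.2.1, by have := hd.2.2.2; omega⟩
  · intro hsub
    have : c ∈ CRe ℓ D T := hsub hc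
    have := this.2.2.2
    omega

end PaperDefs
namespace PaperDefs

lemma vDepth_inl {p : ℕ} (s : TNode p) (i : Fin 3) :
    vDepth (Sum.inl (s, i) : BV p) = nodeDepth (s.1 : ℕ) := rfl

lemma vDepth_inr {p : ℕ} (t : NRNode p) (j : Fin 4) :
    vDepth (Sum.inr (t, j) : BV p) = nodeDepth (t.1 : ℕ) := rfl

lemma πn_inl {p : ℕ} (s : TNode p) (i : Fin 3) : πn (Sum.inl (s, i) : BV p) = (s.1 : ℕ) := rfl
lemma πn_inr {p : ℕ} (t : NRNode p) (j : Fin 4) : πn (Sum.inr (t, j) : BV p) = (t.1 : ℕ) := rfl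

lemma buRel_cases {p : ℕ} (BC : BUChoices p) (u v : BV p) (hr : buRel BC u v) :
    πn u = πn v ∨
    ∃ (s : TNode p) (t : NRNode p) (i : Fin 3) (j : Fin 4) (b : Bool),
      u = Sum.inl (s, i) ∧ v = Sum.inr (t, j) ∧ (s.1 : ℕ) = (t.1 : ℕ) / 2 ∧
      i = other (BC.μ (s.1 : ℕ) (t.1 : ℕ)) b := by
  rcases u with ⟨s, i⟩ | ⟨t, j⟩ <;> rcases v with ⟨s', i'⟩ | ⟨t', j'⟩
  · simp only [buRel] at hr
    left
    simp [πn, hr.1]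
  · simp only [buRel] at hr
    rcases hr with ⟨hpar, hj⟩ | ⟨heq, _⟩
    · right
      rcases hj with ⟨_, hi⟩ | ⟨_, hi⟩
      · exact ⟨s, t', i, j', _, rfl, rfl, hpar, hi⟩
      · exact ⟨s, t', i, j', _, rfl, rfl, hpar, hi⟩
    · left
      simpa [πn] using heq
  · simp only [buRel] at hr
  · simp only [buRel] at hr
    left
    simp [πn, hr.1]

lemma ribRel_cases {ℓ : ℕ} (C : GChoices ℓ) (u v : BV (h ℓ)) (hr : ribRel C u v) :
    ∃ (s : TNode (h ℓ)) (t : NRNode (h ℓ)) (i : Fin 3) (j : Fin 4) (b : Bool),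
      u = Sum.inl (s, i) ∧ v = Sum.inr (t, j) ∧ strictAnc (s.1 : ℕ) (t.1 : ℕ) ∧
      (nodeDepth (s.1 : ℕ), nodeDepth (t.1 : ℕ)) ∈ Nset ℓ ∧
      i = other (topIdx C.toBUChoices (s.1 : ℕ)) b := by
  rcases u with ⟨s, i⟩ | ⟨t, j⟩ <;> rcases v with ⟨s', i'⟩ | ⟨t', j'⟩ <;>
    simp only [ribRel] at hr
  obtain ⟨h1, h2, h3⟩ := hr
  rcases h3 with ⟨_, hi⟩ | ⟨_, hi⟩
  · exact ⟨s, t', i, j', _, rfl, rfl, h1, h2, hi⟩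
  · exact ⟨s, t', i, j', _, rfl, rfl, h1, h2, hi⟩

/-- Classification of the edges of `G_ℓ`. -/
lemma adj_cases {ℓ : ℕ} (C : GChoices ℓ) {u v : BV (h ℓ)} (huv : (Gl C).Adj u v) :
    πn u = πn v ∨
    (∃ (s : TNode (h ℓ)) (t : NRNode (h ℓ)) (i : Fin 3) (j : Fin 4) (b : Bool),
      ((u = Sum.inl (s, i) ∧ v = Sum.inr (t, j)) ∨ (v = Sum.inl (s, i) ∧ u = Sum.inr (t, j))) ∧
      (s.1 : ℕ) = (t.1 : ℕ) / 2 ∧ i = other (C.toBUChoices.μ (s.1 : ℕ) (t.1 : ℕ)) b) ∨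
    (∃ (s : TNode (h ℓ)) (t : NRNode (h ℓ)) (i : Fin 3) (j : Fin 4) (b : Bool),
      ((u = Sum.inl (s, i) ∧ v = Sum.inr (t, j)) ∨ (v = Sum.inl (s, i) ∧ u = Sum.inr (t, j))) ∧
      strictAnc (s.1 : ℕ) (t.1 : ℕ) ∧
      (nodeDepth (s.1 : ℕ), nodeDepth (t.1 : ℕ)) ∈ Nset ℓ ∧
      i = other (topIdx C.toBUChoices (s.1 : ℕ)) b) := by
  rw [Gl, SimpleGraph.fromRel_adj] at huv
  rcases huv.2 with (hbu | hrib) | (hbu | hrib)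
  · rcases buRel_cases _ _ _ hbu with heq | ⟨s, t, i, j, b, h1, h2, h3, h4⟩
    · exact Or.inl heq
    · exact Or.inr (Or.inl ⟨s, t, i, j, b, Or.inl ⟨h1, h2⟩, h3, h4⟩)
  · obtain ⟨s, t, i, j, b, h1, h2, h3, h4, h5⟩ := ribRel_cases _ _ _ hrib
    exact Or.inr (Or.inr ⟨s, t, i, j, b, Or.inl ⟨h1, h2⟩, h3, h4, h5⟩)
  · rcases buRel_cases _ _ _ hbu with heq | ⟨s, t, i, j, b, h1, h2, h3, h4⟩
    · exact Or.inl heq.symm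
    · exact Or.inr (Or.inl ⟨s, t, i, j, b, Or.inr ⟨h1, h2⟩, h3, h4⟩)
  · obtain ⟨s, t, i, j, b, h1, h2, h3, h4, h5⟩ := ribRel_cases _ _ _ hrib
    exact Or.inr (Or.inr ⟨s, t, i, j, b, Or.inr ⟨h1, h2⟩, h3, h4, h5⟩)

/-- Adjacent vertices live at comparable tree nodes. -/
lemma adj_comparable {ℓ : ℕ} (C : GChoices ℓ) {u v : BV (h ℓ)} (huv : (Gl C).Adj u v) :
    anc (πn u) (πn v) ∨ anc (πn v) (πn u) := by
  rcases adj_cases C huv with heq | ⟨s, t, i, j, b, hor, hpar, _⟩ | ⟨s, t, i, j, b, hor, hsa, _⟩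
  · rw [heq]; exact Or.inl (anc_refl _)
  · have hanc : anc (s.1 : ℕ) (t.1 : ℕ) := by rw [hpar]; exact anc_parent _
    rcases hor with ⟨rfl, rfl⟩ | ⟨rfl, rfl⟩
    · exact Or.inl hanc
    · exact Or.inr hanc
  · have hanc : anc (s.1 : ℕ) (t.1 : ℕ) := strictAnc_anc hsa
    rcases hor with ⟨rfl, rfl⟩ | ⟨rfl, rfl⟩
    · exact Or.inl hanc
    · exact Or.inr hanc

/-- The ψ-potential increases by at most 1 along an edge between vertices of
depth at least `D`. -/
lemma adj_psi_step {ℓ D : ℕ} (C : GChoices ℓ) {u v : BV (h ℓ)} (huv : (Gl C).Adj u v)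
    (hu : D ≤ vDepth u) (hv : D ≤ vDepth v) :
    psi ℓ D (vDepth v) ≤ psi ℓ D (vDepth u) + 1 := by
  rcases adj_cases C huv with heq | ⟨s, t, i, j, b, hor, hpar, _⟩ | ⟨s, t, i, j, b, hor, hsa, hmem, _⟩
  · have : vDepth u = vDepth v := by unfold vDepth; rw [heq]
    rw [this]
    omega
  · have ht2 : 2 ≤ (t.1 : ℕ) := t.2
    have hd : nodeDepth ((t.1 : ℕ) / 2) + 1 = nodeDepth (t.1 : ℕ) := nodeDepth_child ht2
    rcases hor with ⟨rfl, rfl⟩ | ⟨rfl, rfl⟩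
    · rw [vDepth_inl, vDepth_inr, ← hd, ← hpar]
      exact psi_succ_le
    · rw [vDepth_inl, vDepth_inr] at *
      have : nodeDepth (s.1 : ℕ) ≤ nodeDepth (t.1 : ℕ) := by rw [← hd, hpar]; omega
      exact le_trans (psi_mono this) (by omega)
  · rcases hor with ⟨rfl, rfl⟩ | ⟨rfl, rfl⟩
    · rw [vDepth_inl, vDepth_inr] at *
      rw [psi_rib_eq hmem hu]
      omega
    · rw [vDepth_inl, vDepth_inr] at *
      rw [psi_rib_eq hmem hv]
      omega

end PaperDefs
namespace PaperDefs

/-! ### The three parts of the target set -/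

/-- Vertices at the node of `x`, other than `x`. -/
def S7 (p n : ℕ) (x : BV p) : Set (BV p) := {u | πn u = n} \ {x}

/-- The two endpoints in `K^{parent}` of the edge `μ_{parent}(n)`. -/
def P2set (ℓ : ℕ) (C : GChoices ℓ) (n : ℕ) : Set (BV (h ℓ)) :=
  {u | ∃ (sn : TNode (h ℓ)) (b : Bool),
    u = Sum.inl (sn, other (C.toBUChoices.μ (n / 2) n) b) ∧ (sn.1 : ℕ) = n / 2}

/-- Top-edge endpoints of crossing sources of small ψ-index. -/
def Y3set (ℓ : ℕ) (C : GChoices ℓ) (r n D : ℕ) : Set (BV (h ℓ)) :=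
  {u | ∃ (sn : TNode (h ℓ)) (b : Bool) (T : ℕ),
    u = Sum.inl (sn, other (topIdx C.toBUChoices (sn.1 : ℕ)) b) ∧
    (nodeDepth (sn.1 : ℕ), T) ∈ Nset ℓ ∧ nodeDepth (sn.1 : ℕ) < D ∧ D ≤ T ∧
    psi ℓ D T ≤ r ∧ anc (sn.1 : ℕ) n}

lemma other_eq_iff : ∀ (k : Fin 3) (b : Bool), (other k b = k + 1 ↔ b = true) := by decide

lemma S7_ncard {p n : ℕ} (x : BV p) (hx : πn x = n) : (S7 p n x).ncard ≤ 6 := by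
  classical
  have h7 : ({u : BV p | πn u = n}).ncard ≤ 7 := by
    have hle : ({u : BV p | πn u = n}).ncard ≤ (Set.univ : Set (Fin 3 ⊕ Fin 4)).ncard := by
      refine Set.ncard_le_ncard_of_injOn
        (fun u : BV p => (match u with
          | Sum.inl (_, i) => Sum.inl i
          | Sum.inr (_, j) => Sum.inr j : Fin 3 ⊕ Fin 4))
        (fun a _ => Set.mem_univ _) ?_ Set.finite_univ
      rintro (⟨s, i⟩ | ⟨t, j⟩) hu (⟨s', i'⟩ | ⟨t', j'⟩) hv heq <;>
        simp only [Set.mem_setOf_eq, πn] at hu hv <;> simp_all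
      · have : (s.1 : ℕ) = (s'.1 : ℕ) := by rw [hu, hv]
        exact Subtype.ext (Fin.ext this)
      · have : (t.1 : ℕ) = (t'.1 : ℕ) := by rw [hu, hv]
        exact Subtype.ext (Fin.ext this)
    refine le_trans hle ?_
    rw [Set.ncard_univ]
    simp [Nat.card_eq_fintype_card]
  have hmem : x ∈ {u : BV p | πn u = n} := hx
  have := Set.ncard_diff_singleton_add_one hmem (Set.toFinite _)
  unfold S7
  omega

lemma P2set_ncard (ℓ : ℕ) (C : GChoices ℓ) (n : ℕ) : (P2set ℓ C n).ncard ≤ 2 := by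
  classical
  have hle : (P2set ℓ C n).ncard ≤ (Set.univ : Set Bool).ncard := by
    refine Set.ncard_le_ncard_of_injOn
      (fun u : BV (h ℓ) => (match u with
        | Sum.inl (_, i) => decide (i = C.toBUChoices.μ (n / 2) n + 1)
        | Sum.inr _ => false : Bool))
      (fun a _ => Set.mem_univ _) ?_ Set.finite_univ
    rintro u ⟨sn, b, rfl, hsn⟩ u' ⟨sn', b', rfl, hsn'⟩ heq
    simp only [decide_eq_decide] at heq
    have hb : b = b' := by
      rcases Bool.eq_false_or_eq_true b with rfl | rfl <;>
        rcases Bool.eq_false_or_eq_true b' with rfl | rfl <;>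
          simp_all [other_eq_iff]
    subst hb
    have : sn = sn' := Subtype.ext (Fin.ext (by rw [hsn, hsn']))
    rw [this]
  refine le_trans hle ?_
  rw [Set.ncard_univ]
  simp [Nat.card_eq_fintype_card]

lemma Y3set_ncard (ℓ : ℕ) (C : GChoices ℓ) (r n D : ℕ) : (Y3set ℓ C r n D).ncard ≤ 2 * r := by
  classical
  set F : BV (h ℓ) → ℕ × Bool := fun u =>
    ((psi ℓ D (sInf {T | (vDepth u, T) ∈ Nset ℓ}),
      (match u with
        | Sum.inl (s, i) => decide (i = topIdx C.toBUChoices (s.1 : ℕ) + 1)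
        | Sum.inr _ => false : Bool)) : ℕ × Bool) with hF
  have hval : ∀ (sn : TNode (h ℓ)) (b : Bool) (T : ℕ),
      (nodeDepth (sn.1 : ℕ), T) ∈ Nset ℓ →
      F (Sum.inl (sn, other (topIdx C.toBUChoices (sn.1 : ℕ)) b)) = (psi ℓ D T, b) := by
    intro sn b T hmem
    have hset : {T' | (vDepth (Sum.inl (sn, other (topIdx C.toBUChoices (sn.1 : ℕ)) b) :
        BV (h ℓ)), T') ∈ Nset ℓ} = {T} := by
      ext T'
      simp only [Set.mem_setOf_eq, Set.mem_singleton_iff, vDepth_inl]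
      constructor
      · intro h'
        have := Nset_left_unique h' hmem rfl
        exact congrArg Prod.snd this
      · rintro rfl; exact hmem
    have hdec : (decide (other (topIdx C.toBUChoices (sn.1 : ℕ)) b =
        topIdx C.toBUChoices (sn.1 : ℕ) + 1) : Bool) = b := by
      rcases Bool.eq_false_or_eq_true b with rfl | rfl <;>
        simp [other_eq_iff]
    rw [hF]
    simp only [hset, csInf_singleton]
    exact congrArg _ hdec
  have hle : (Y3set ℓ C r n D).ncard ≤
      (↑(Finset.Icc 1 r ×ˢ (Finset.univ : Finset Bool)) : Set (ℕ × Bool)).ncard := by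
    refine Set.ncard_le_ncard_of_injOn F ?_ ?_ (Finset.finite_toSet _)
    · rintro u ⟨sn, b, T, rfl, hmem, hSD, hDT, hpsi, hanc⟩
      rw [hval sn b T hmem]
      simp only [Finset.coe_product, Set.mem_prod, Finset.mem_coe, Finset.mem_Icc,
        Finset.mem_univ, and_true]
      have h1 : 1 ≤ psi ℓ D T := one_le_psi ⟨(nodeDepth (sn.1 : ℕ), T), hmem, hSD, hDT, le_refl _⟩
      exact ⟨h1, hpsi⟩
    · rintro u ⟨sn, b, T, rfl, hmem, hSD, hDT, hpsi, hanc⟩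
        u' ⟨sn', b', T', rfl, hmem', hSD', hDT', hpsi', hanc'⟩ heq
      rw [hval sn b T hmem, hval sn' b' T' hmem'] at heq
      have hpsiEq : psi ℓ D T = psi ℓ D T' := congrArg Prod.fst heq
      have hbEq : b = b' := congrArg Prod.snd heq
      have hTT : T = T' := by
        rcases lt_trichotomy T T' with hlt | heqT | hgt
        · exfalso
          have := psi_strict (T := T) (T' := T')
            ⟨(nodeDepth (sn'.1 : ℕ), T'), hmem', hSD', hDT', le_refl _⟩
            ⟨(nodeDepth (sn'.1 : ℕ), T'), ⟨hmem', hSD', hDT', le_refl _⟩, rfl⟩ hlt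
          omega
        · exact heqT
        · exfalso
          have := psi_strict (T := T') (T' := T)
            ⟨(nodeDepth (sn.1 : ℕ), T), hmem, hSD, hDT, le_refl _⟩
            ⟨(nodeDepth (sn.1 : ℕ), T), ⟨hmem, hSD, hDT, le_refl _⟩, rfl⟩ hgt
          omega
      subst hTT
      have hpair := Nset_right_unique hmem hmem' rfl
      have hSS : nodeDepth (sn.1 : ℕ) = nodeDepth (sn'.1 : ℕ) := congrArg Prod.fst hpair
      have hsn : sn = sn' := by
        have h1 : 1 ≤ (sn.1 : ℕ) := sn.2
        have h1' : 1 ≤ (sn'.1 : ℕ) := sn'.2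
        rcases anc_total hanc hanc' with hcc | hcc
        · exact Subtype.ext (Fin.ext (anc_eq_of_depth_le hcc h1 (by omega)))
        · exact (Subtype.ext (Fin.ext (anc_eq_of_depth_le hcc h1' (by omega)))).symm
      rw [hsn, hbEq]
  refine le_trans hle ?_
  rw [Set.ncard_coe_finset, Finset.card_product, Nat.card_Icc]
  simp
  omega

end PaperDefs
namespace PaperDefs

lemma last_edge {ℓ r n D : ℕ} (C : GChoices ℓ) {x y z : BV (h ℓ)}
    (hn1 : 1 ≤ n) (hDn : nodeDepth n = D)
    (hadj : (Gl C).Adj z y) (hanc : anc n (πn z)) (hzD : D ≤ vDepth z)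
    (hψz : psi ℓ D (vDepth z) ≤ r) (hyD : vDepth y ≤ D) (hyx : y ≠ x) :
    y ∈ S7 (h ℓ) n x ∪ P2set ℓ C n ∪ Y3set ℓ C r n D := by
  have hyn : πn y = n → y ∈ S7 (h ℓ) n x ∪ P2set ℓ C n ∪ Y3set ℓ C r n D := by
    intro hπ
    exact Or.inl (Or.inl ⟨hπ, fun hc => hyx hc⟩)
  rcases adj_cases C hadj with heq | ⟨s, t, i, j, b, hor, hpar, hi⟩ |
      ⟨s, t, i, j, b, hor, hsa, hmem, hi⟩
  · -- same node
    apply hyn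
    have hancy : anc n (πn y) := heq ▸ hanc
    have : n = πn y := anc_eq_of_depth_le hancy hn1 (by
      have : vDepth y = nodeDepth (πn y) := rfl
      omega)
    exact this.symm
  · -- tree (ladder) edge
    have ht2 : 2 ≤ (t.1 : ℕ) := t.2
    have hc := nodeDepth_child ht2
    rcases hor with ⟨rfl, rfl⟩ | ⟨rfl, rfl⟩
    · -- z = inl (s,i) (parent side), y = inr (t,j): impossible, y too deep
      exfalso
      rw [vDepth_inl] at hzD
      rw [vDepth_inr] at hyD
      rw [← hpar] at hc
      omega
    · -- y = inl (s,i), z = inr (t,j)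
      rw [vDepth_inr] at hzD
      rw [vDepth_inl] at hyD
      rw [πn_inr] at hanc
      have hans : anc (s.1 : ℕ) (t.1 : ℕ) := hpar ▸ anc_parent (t.1 : ℕ)
      have hs1 : 1 ≤ (s.1 : ℕ) := s.2
      rcases anc_total hanc hans with hns | hsn
      · apply hyn
        rw [πn_inl]
        exact (anc_eq_of_depth_le hns hn1 (by omega)).symm
      · by_cases hds : D ≤ nodeDepth (s.1 : ℕ)
        · apply hyn
          rw [πn_inl]
          exact anc_eq_of_depth_le hsn hs1 (by omega)
        · -- s strictly above x: then t = n, parent pair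
          push_neg at hds
          rw [← hpar] at hc
          have hnt : n = (t.1 : ℕ) := anc_eq_of_depth_le hanc hn1 (by omega)
          have hsn2 : (s.1 : ℕ) = n / 2 := by rw [hpar, ← hnt]
          refine Or.inl (Or.inr ⟨s, b, ?_, hsn2⟩)
          rw [hi, hsn2, ← hnt]
  · -- rib edge
    rcases hor with ⟨rfl, rfl⟩ | ⟨rfl, rfl⟩
    · -- z = inl (s,i), y = inr (t,j): impossible, y too deep
      exfalso
      have hs1 : 1 ≤ (s.1 : ℕ) := s.2
      have := strictAnc_depth_lt hsa hs1
      rw [vDepth_inl] at hzD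
      rw [vDepth_inr] at hyD
      omega
    · -- y = inl (s,i), z = inr (t,j)
      rw [vDepth_inr] at hzD hψz
      rw [vDepth_inl] at hyD
      rw [πn_inr] at hanc
      have hans : anc (s.1 : ℕ) (t.1 : ℕ) := strictAnc_anc hsa
      have hs1 : 1 ≤ (s.1 : ℕ) := s.2
      rcases anc_total hanc hans with hns | hsn
      · apply hyn
        rw [πn_inl]
        exact (anc_eq_of_depth_le hns hn1 (by omega)).symm
      · by_cases hds : D ≤ nodeDepth (s.1 : ℕ)
        · apply hyn
          rw [πn_inl]
          exact anc_eq_of_depth_le hsn hs1 (by omega)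
        · push_neg at hds
          refine Or.inr ⟨s, b, nodeDepth (t.1 : ℕ), by rw [hi], hmem, hds, hzD, hψz, hsn⟩

lemma walk_main {ℓ r n D : ℕ} (C : GChoices ℓ) (x : BV (h ℓ))
    (hn1 : 1 ≤ n) (hDn : nodeDepth n = D) :
    ∀ (y x' : BV (h ℓ)) (w : (Gl C).Walk x' y), y ≠ x → vDepth y ≤ D → w.IsPath →
      anc n (πn x') → psi ℓ D (vDepth x') + w.length ≤ r + 1 →
      (∀ z ∈ w.support, z ≠ y → D ≤ vDepth z) → 1 ≤ w.length →
      y ∈ S7 (h ℓ) n x ∪ P2set ℓ C n ∪ Y3set ℓ C r n D := by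
  intro y x' w
  induction w with
  | nil => intro _ _ _ _ _ _ hlen; simp at hlen
  | @cons a bb c hadj p ih =>
    intro hyx hyD hpath hanc hψ hsup _
    have hay : a ≠ c := by
      have hyp : c ∈ p.support := SimpleGraph.Walk.end_mem_support p
      have hh := (SimpleGraph.Walk.cons_isPath_iff hadj p).mp hpath
      intro hc; rw [hc] at hh; exact hh.2 hyp
    have haD : D ≤ vDepth a :=
      hsup a (SimpleGraph.Walk.start_mem_support _) hay
    rw [SimpleGraph.Walk.length_cons] at hψ
    by_cases hby : bb = c
    · subst hby
      exact last_edge C hn1 hDn hadj hanc haD (by omega) hyD hyx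
    · have hbb : bb ∈ (SimpleGraph.Walk.cons hadj p).support := by
        rw [SimpleGraph.Walk.support_cons]
        exact List.mem_cons_of_mem _ (SimpleGraph.Walk.start_mem_support p)
      have hbD : D ≤ vDepth bb := hsup bb hbb hby
      have hanc' : anc n (πn bb) :=
        anc_step hn1 (one_le_πn bb) hDn hanc (adj_comparable C hadj) hbD
      have hstep := adj_psi_step C hadj haD hbD
      have hplen : 1 ≤ p.length := by
        cases p with
        | nil => exact absurd rfl hby
        | cons _ _ => simp
      refine ih hyx hyD hpath.of_cons hanc' (by omega) ?_ hplen
      intro z hz hzy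
      refine hsup z ?_ hzy
      rw [SimpleGraph.Walk.support_cons]
      exact List.mem_cons_of_mem _ hz

end PaperDefs
namespace PaperDefs

/-- For every `ℓ ≥ 1` and every `r ≥ 1`, the `r`-coloring number of `G_ℓ`
satisfies `col_r(G_ℓ) ≤ 2r + 8` (for every choice of the injections `μ_s` and of
the rib endpoint labelings). -/
theorem statement18 :
    ∀ ℓ : ℕ, 1 ≤ ℓ → ∀ r : ℕ, 1 ≤ r → ∀ C : GChoices ℓ,
      ColAtMost (Gl C) r (2 * r + 8) := by
  intro ℓ _ r _ C
  classical
  refine ⟨ford (h ℓ), ford_injective _, ?_⟩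
  intro x
  set n := πn x with hn
  set D := vDepth x with hD
  have hn1 : 1 ≤ n := one_le_πn x
  have hDn : nodeDepth n = D := rfl
  have hsub : {y | RReach (Gl C) (ford (h ℓ)) r x y} ⊆
      S7 (h ℓ) n x ∪ P2set ℓ C n ∪ Y3set ℓ C r n D := by
    rintro y ⟨hfy, w, hpath, hwlen, hsupf⟩
    have hyx : y ≠ x := by
      intro hc; rw [hc] at hfy; omega
    have hyD : vDepth y ≤ D := depth_le_of_ford_le (le_of_lt hfy)
    have hsup : ∀ z ∈ w.support, z ≠ y → D ≤ vDepth z := by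
      intro z hz hzy
      by_cases hzx : z = x
      · rw [hzx]
      · exact depth_le_of_ford_le (le_of_lt (hsupf z hz hzx hzy))
    have hlen : 1 ≤ w.length := by
      cases w with
      | nil => exact absurd rfl hyx
      | cons _ _ => simp
    have hψ : psi ℓ D (vDepth x) + w.length ≤ r + 1 := by
      have h1 : psi ℓ D (vDepth x) ≤ 1 := by rw [← hD, ← hDn]; exact psi_at_D
      omega
    exact walk_main C x hn1 hDn y x w hyx hyD hpath (anc_refl n) hψ hsup hlen
  calc {y | RReach (Gl C) (ford (h ℓ)) r x y}.ncard
      ≤ (S7 (h ℓ) n x ∪ P2set ℓ C n ∪ Y3set ℓ C r n D).ncard :=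
        Set.ncard_le_ncard hsub (Set.toFinite _)
    _ ≤ (S7 (h ℓ) n x ∪ P2set ℓ C n).ncard + (Y3set ℓ C r n D).ncard :=
        Set.ncard_union_le _ _
    _ ≤ (S7 (h ℓ) n x).ncard + (P2set ℓ C n).ncard + (Y3set ℓ C r n D).ncard := by
        have := Set.ncard_union_le (S7 (h ℓ) n x) (P2set ℓ C n)
        omega
    _ ≤ 2 * r + 8 := by
        have h1 := S7_ncard (p := h ℓ) (n := n) x hn.symm
        have h2 := P2set_ncard ℓ C n
        have h3 := Y3set_ncard ℓ C r n D
        omega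

end PaperDefs
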